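/- arXiv:1804.02127 — 6 statements merged into one kernel-verified Lean document; each statement's English description precedes it below -/
import Mathlib

section
/- Let 0 < α < 2 < β be real numbers. Define g₃(λ) = (2−α)λ^(β−α) − (β−α)λ^(2−α) + β − 2 for λ > 0. Then g₃(λ) ≥ 0 for all λ ∈ (0,1]. -/
theorem g3_nonneg (α β : ℝ) (hα : 0 < α) (hα2 : α < 2) (hβ : 2 < β) :
    ∀ lam : ℝ, 0 < lam → lam ≤ 1 →
      0 ≤ (2 - α) * lam ^ (β - α) - (β - α) * lam ^ (2 - α) + β - 2 := by
  intro lam hl hl1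
  set a : ℝ := 2 - α with ha
  set b : ℝ := β - 2 with hb
  have ha0 : 0 < a := by simp only [ha]; linarith
  have hb0 : 0 < b := by simp only [hb]; linarith
  have hab : 0 < a + b := by linarith
  have key := Real.geom_mean_le_arith_mean2_weighted
    (w₁ := a / (a + b)) (w₂ := b / (a + b)) (p₁ := lam ^ (a + b)) (p₂ := 1)
    (by positivity) (by positivity) (by positivity) (by norm_num)
    (by field_simp)
  have hpow : (lam ^ (a + b)) ^ (a / (a + b)) = lam ^ a := by
    rw [← Real.rpow_mul hl.le]
    congr 1
    field_simp
  rw [hpow, Real.one_rpow, mul_one] at key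
  -- key : lam ^ a ≤ a / (a+b) * lam ^ (a+b) + b / (a+b)
  have key2 : (a + b) * lam ^ a ≤ a * lam ^ (a + b) + b := by
    have := mul_le_mul_of_nonneg_left key hab.le
    field_simp at this ⊢
    linarith [this]
  have hβα : β - α = a + b := by simp only [ha, hb]; ring
  have h2α : (2 : ℝ) - α = a := rfl
  rw [hβα]
  have hbeq : β - 2 = b := rfl
  -- goal arithmetic
  simp only [hb] at key2 ⊢
  linarith [key2]
end

section
/- Let 0 < α < 2 < β. Define g₂(λ) = 2α(2−α)λ^β − αβ(β−α)λ² + 2β(β−2)λ^α − (β−α)(β−2)(2−α). Then g₂(λ) ≤ 0 for all λ ∈ (0,1]. -/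
/-! `g₂(1) = 0` and `g₂'(λ) = 2αβ λ^(α-1) g₃(λ)`, where `g₃ ≥ 0` on `(0, ∞)` is the weighted
AM-GM inequality `x^(2-α) ≤ ((2-α) x^(β-α) + (β-2)) / (β-α)`. Hence `g₂` is monotone on
`(0, ∞)` and nonpositive on `(0, 1]`. -/

open Real Set

/-- Weighted AM-GM between `x ^ q` and `1` with weights `p / q` and `(q - p) / q`. -/
lemma mul_rpow_le_mul_rpow_add_sub {p q x : ℝ} (hx : 0 ≤ x) (hp : 0 < p) (hpq : p ≤ q) :
    q * x ^ p ≤ p * x ^ q + (q - p) := by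
  have hq : 0 < q := hp.trans_le hpq
  have hw : p / q + (q - p) / q = 1 := by field_simp; ring
  have amgm := geom_mean_le_arith_mean2_weighted (div_nonneg hp.le hq.le)
    (div_nonneg (sub_nonneg.2 hpq) hq.le) (rpow_nonneg hx q) zero_le_one hw
  have hpow : (x ^ q) ^ (p / q) = x ^ p := by
    rw [← rpow_mul hx, mul_div_cancel₀ p hq.ne']
  rw [hpow, one_rpow, mul_one] at amgm
  calc q * x ^ p ≤ q * (p / q * x ^ q + (q - p) / q * 1) := by gcongr
    _ = p * x ^ q + (q - p) := by field_simp

namespace G2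

variable (α β : ℝ)

noncomputable def g₂ (lam : ℝ) : ℝ :=
  2 * α * (2 - α) * lam ^ β - α * β * (β - α) * lam ^ (2:ℝ)
    + 2 * β * (β - 2) * lam ^ α - (β - α) * (β - 2) * (2 - α)

noncomputable def g₃ (lam : ℝ) : ℝ :=
  (2 - α) * lam ^ (β - α) - (β - α) * lam ^ (2 - α) + β - 2

lemma g₂_one : g₂ α β 1 = 0 := by
  simp only [g₂, one_rpow]
  ring

lemma hasDerivAt_g₂ {x : ℝ} (hx : 0 < x) :
    HasDerivAt (g₂ α β) (2 * α * β * x ^ (α - 1) * g₃ α β x) x := by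
  have hpow (r : ℝ) : HasDerivAt (fun y : ℝ => y ^ r) (r * x ^ (r - 1)) x :=
    hasDerivAt_rpow_const (Or.inl hx.ne')
  have H := ((((hpow β).const_mul (2 * α * (2 - α))).sub
      ((hpow 2).const_mul (α * β * (β - α)))).add
      ((hpow α).const_mul (2 * β * (β - 2)))).sub_const ((β - α) * (β - 2) * (2 - α))
  refine H.congr_deriv ?_
  have hadd (r : ℝ) : x ^ (α - 1) * x ^ (r - α) = x ^ (r - 1) := by
    rw [← rpow_add hx]; ring_nf
  rw [g₃, ← hadd β, ← hadd 2]
  ring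

variable {α β}

lemma g₃_nonneg (hα2 : α < 2) (hβ : 2 ≤ β) {x : ℝ} (hx : 0 ≤ x) : 0 ≤ g₃ α β x := by
  have := mul_rpow_le_mul_rpow_add_sub hx (sub_pos.2 hα2) (sub_le_sub_right hβ α)
  rw [g₃]
  linarith

lemma monotoneOn_g₂ (hα : 0 ≤ α) (hα2 : α < 2) (hβ : 2 ≤ β) : MonotoneOn (g₂ α β) (Ioi 0) := by
  have hd (x : ℝ) (hx : x ∈ Ioi 0) := hasDerivAt_g₂ α β (mem_Ioi.1 hx)
  refine monotoneOn_of_deriv_nonneg (convex_Ioi 0)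
    (fun x hx => (hd x hx).continuousAt.continuousWithinAt)
    (fun x hx => (hd x (interior_subset hx)).differentiableAt.differentiableWithinAt)
    (fun x hx => ?_)
  rw [interior_Ioi, mem_Ioi] at hx
  have hβ0 : 0 ≤ β := by linarith
  rw [(hd x hx).deriv]
  exact mul_nonneg (by positivity) (g₃_nonneg hα2 hβ hx.le)

end G2

open G2 in
theorem g2_nonpos (α β : ℝ) (hα : 0 < α) (hα2 : α < 2) (hβ : 2 < β) :
    ∀ lam : ℝ, 0 < lam → lam ≤ 1 →
      2 * α * (2 - α) * lam ^ β - α * β * (β - α) * lam ^ (2:ℝ)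
        + 2 * β * (β - 2) * lam ^ α - (β - α) * (β - 2) * (2 - α) ≤ 0 := by
  intro lam hlam hlam1
  calc g₂ α β lam ≤ g₂ α β 1 :=
        monotoneOn_g₂ hα.le hα2 hβ.le hlam (mem_Ioi.2 one_pos) hlam1
    _ = 0 := g₂_one α β
end

section
/- Let 0 < α < 2 < β. For all λ ∈ (0,1), the quantity αλ² − 2λ^α − α + 2 is positive, and the inequality (β/(2−αλ^(2−α)))·(λ^(2−α) + ((β−α−2)/α)·λ^(β−α)) ≤ (2λ^β − βλ² − 2 + β)/(αλ² − 2λ^α − α + 2) holds. -/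
/-!
The first claim is Bernoulli's inequality `(λ²)^(α/2) < 1 + (α/2)(λ² - 1)`.

For the second, multiplying the left-hand side through by `α λ^α` and clearing the (positive)
denominators, the difference of the two sides becomes `λ^α G(λ)` with `G = g1Gap α β`. One has
`G(1) = 0` and `G'(x) = (β - α) x^(1-α) H(x)`, where `H` splits as a nonpositive multiple of
`β x^(β-2) - 2 - (β-2) x^β` plus a nonnegative multiple of `x^α - 1 - (α/2)(x² - 1)`; both are
`≤ 0` by Bernoulli's inequality (applied to `x^β` with exponent `(β-2)/β`, and to `x²` with
exponent `α/2`). Hence `G` is antitone on `(0, ∞)` and `G(λ) ≥ G(1) = 0`.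
-/

open Real Set

lemma rpow_le_one_add_mul_sub {x p : ℝ} (hx : 0 ≤ x) (hp0 : 0 ≤ p) (hp1 : p ≤ 1) :
    x ^ p ≤ 1 + p * (x - 1) := by
  simpa using rpow_one_add_le_one_add_mul_self (s := x - 1) (by linarith) hp0 hp1

lemma rpow_lt_one_add_mul_sub {x p : ℝ} (hx : 0 ≤ x) (hx1 : x ≠ 1) (hp0 : 0 < p) (hp1 : p < 1) :
    x ^ p < 1 + p * (x - 1) := by
  simpa using rpow_one_add_lt_one_add_mul_self (s := x - 1) (by linarith) (sub_ne_zero.2 hx1) hp0 hp1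

lemma mul_rpow_two_sub_two_mul_rpow_sub_add_two_pos {α x : ℝ} (hα0 : 0 < α) (hα2 : α < 2)
    (hx0 : 0 ≤ x) (hx1 : x ≠ 1) : 0 < α * x ^ (2:ℝ) - 2 * x ^ α - α + 2 := by
  have hsq : x ^ (2:ℝ) ≠ 1 := by
    rw [rpow_two]
    exact fun h => hx1 ((pow_eq_one_iff_of_nonneg hx0 two_ne_zero).1 h)
  have h := rpow_lt_one_add_mul_sub (rpow_nonneg hx0 2) hsq (by linarith : 0 < α / 2)
    (by linarith : α / 2 < 1)
  rw [← rpow_mul hx0, mul_div_cancel₀ α two_ne_zero] at h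
  linarith

noncomputable def g1Gap (α β x : ℝ) : ℝ :=
  2 * α * (β - 2) - 2 * α * (β - α) * x ^ (2 - α) - β * (2 - α) * (β - α - 2) * x ^ (β - α)
    + 2 * (β - 2) * (β - α) * x ^ β - α * (β - 2) * (β - α) * x ^ (β + 2 - α)

noncomputable def g1GapSlope (α β x : ℝ) : ℝ :=
  -(2 * α * (2 - α)) - β * (2 - α) * (β - α - 2) * x ^ (β - 2)
    + 2 * β * (β - 2) * x ^ (β - 2 + α) - α * (β - 2) * (β + 2 - α) * x ^ β

section

variable {α β : ℝ}

lemma g1Gap_one : g1Gap α β 1 = 0 := by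
  simp only [g1Gap, one_rpow]
  ring

lemma hasDerivAt_g1Gap {x : ℝ} (hx : 0 < x) :
    HasDerivAt (g1Gap α β) ((β - α) * x ^ (1 - α) * g1GapSlope α β x) x := by
  have hrpow (p : ℝ) := hasDerivAt_rpow_const (p := p) (Or.inl hx.ne')
  have hpow {a b c : ℝ} (h : c = a + b) : x ^ c = x ^ a * x ^ b := h ▸ rpow_add hx a b
  unfold g1Gap
  refine (((((hasDerivAt_const x _).sub ((hrpow (2 - α)).const_mul _)).sub
    ((hrpow (β - α)).const_mul _)).add ((hrpow β).const_mul _)).sub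
    ((hrpow (β + 2 - α)).const_mul _)).congr_deriv ?_
  rw [g1GapSlope, show 2 - α - 1 = 1 - α by ring,
    hpow (show β - α - 1 = (1 - α) + (β - 2) by ring),
    hpow (show β - 1 = (1 - α) + (β - 2 + α) by ring),
    hpow (show β + 2 - α - 1 = (1 - α) + β by ring)]
  ring

lemma g1GapSlope_nonpos (hα0 : 0 ≤ α) (hα2 : α ≤ 2) (hβ : 2 ≤ β) {x : ℝ} (hx : 0 < x) :
    g1GapSlope α β x ≤ 0 := by
  have hβ0 : 0 < β := by linarith
  have hxβ : x ^ (β - 2) * x ^ (2:ℝ) = x ^ β := by rw [← rpow_add hx]; ring_nf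
  have hαx : x ^ α ≤ 1 + α / 2 * (x ^ (2:ℝ) - 1) := by
    have h := rpow_le_one_add_mul_sub (rpow_nonneg hx.le 2) (by linarith : 0 ≤ α / 2)
      (by linarith : α / 2 ≤ 1)
    rwa [← rpow_mul hx.le, mul_div_cancel₀ α two_ne_zero] at h
  have hβx : β * x ^ (β - 2) ≤ 2 + (β - 2) * x ^ β := by
    have h := rpow_le_one_add_mul_sub (rpow_nonneg hx.le β) (div_nonneg (by linarith) hβ0.le)
      (by rw [div_le_one hβ0]; linarith : (β - 2) / β ≤ 1)
    rw [← rpow_mul hx.le, mul_div_cancel₀ _ hβ0.ne'] at h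
    have := mul_le_mul_of_nonneg_left h hβ0.le
    field_simp at this
    linarith
  have hsplit : g1GapSlope α β x = α * (2 - α) * (β * x ^ (β - 2) - (2 + (β - 2) * x ^ β))
      + 2 * β * (β - 2) * x ^ (β - 2) * (x ^ α - (1 + α / 2 * (x ^ (2:ℝ) - 1))) := by
    rw [g1GapSlope, rpow_add hx, ← hxβ]
    ring
  rw [hsplit]
  have hc : 0 ≤ 2 * β * (β - 2) * x ^ (β - 2) := by
    have := rpow_nonneg hx.le (β - 2)
    have : 0 ≤ β - 2 := by linarith
    positivity
  exact add_nonpos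
    (mul_nonpos_of_nonneg_of_nonpos (by nlinarith) (by linarith))
    (mul_nonpos_of_nonneg_of_nonpos hc (by linarith))

lemma antitoneOn_g1Gap (hα0 : 0 ≤ α) (hα2 : α ≤ 2) (hβ : 2 ≤ β) :
    AntitoneOn (g1Gap α β) (Ioi 0) := by
  have hderiv : ∀ x ∈ interior (Ioi (0:ℝ)), HasDerivAt (g1Gap α β)
      ((β - α) * x ^ (1 - α) * g1GapSlope α β x) x := by
    rw [interior_Ioi]
    exact fun x hx => hasDerivAt_g1Gap hx
  refine antitoneOn_of_hasDerivWithinAt_nonpos (convex_Ioi 0)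
    (fun x hx => (hderiv x (by rwa [interior_Ioi])).continuousAt.continuousWithinAt)
    (fun x hx => (hderiv x hx).hasDerivWithinAt) fun x hx => ?_
  rw [interior_Ioi] at hx
  exact mul_nonpos_of_nonneg_of_nonpos
    (mul_nonneg (by linarith) (rpow_nonneg (le_of_lt hx) _)) (g1GapSlope_nonpos hα0 hα2 hβ hx)

lemma g1Gap_nonneg (hα0 : 0 ≤ α) (hα2 : α ≤ 2) (hβ : 2 ≤ β) {x : ℝ} (hx0 : 0 < x) (hx1 : x ≤ 1) :
    0 ≤ g1Gap α β x :=
  g1Gap_one (α := α) (β := β) ▸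
    antitoneOn_g1Gap hα0 hα2 hβ hx0 (zero_lt_one' ℝ) hx1

lemma cross_sub_eq_rpow_mul_g1Gap {x : ℝ} (hx : 0 < x) :
    α * (2 * x ^ β - β * x ^ (2:ℝ) - 2 + β) * (2 * x ^ α - α * x ^ (2:ℝ))
      - β * (α * x ^ (2:ℝ) + (β - α - 2) * x ^ β) * (α * x ^ (2:ℝ) - 2 * x ^ α - α + 2)
      = x ^ α * g1Gap α β x := by
  have hpow {a b c : ℝ} (h : c = a + b) : x ^ c = x ^ a * x ^ b := h ▸ rpow_add hx a b
  rw [g1Gap, hpow (show (2:ℝ) = α + (2 - α) by ring), hpow (show β = α + (β - α) by ring),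
    hpow (show β + 2 - α = β + (2 - α) by ring), hpow (show β = α + (β - α) by ring)]
  ring

lemma g1_lhs_eq_div {x : ℝ} (hα : α ≠ 0) (hx : 0 < x) :
    β / (2 - α * x ^ (2 - α)) * (x ^ (2 - α) + (β - α - 2) / α * x ^ (β - α))
      = β * (α * x ^ (2:ℝ) + (β - α - 2) * x ^ β) / (α * (2 * x ^ α - α * x ^ (2:ℝ))) := by
  have hxα : x ^ α ≠ 0 := (rpow_pos_of_pos hx α).ne'
  have hpow {a b c : ℝ} (h : c = a + b) : x ^ c = x ^ a * x ^ b := h ▸ rpow_add hx a b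
  rw [hpow (show (2:ℝ) = α + (2 - α) by ring), hpow (show β = α + (β - α) by ring)]
  field_simp

end

theorem g1_ineq (α β : ℝ) (hα : 0 < α) (hα2 : α < 2) (hβ : 2 < β) :
    ∀ lam : ℝ, 0 < lam → lam < 1 →
      0 < α * lam ^ (2:ℝ) - 2 * lam ^ α - α + 2 ∧
      (β / (2 - α * lam ^ (2 - α))) *
          (lam ^ (2 - α) + ((β - α - 2) / α) * lam ^ (β - α)) ≤
        (2 * lam ^ β - β * lam ^ (2:ℝ) - 2 + β) /
          (α * lam ^ (2:ℝ) - 2 * lam ^ α - α + 2) := by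
  intro lam hl0 hl1
  have hA := mul_rpow_two_sub_two_mul_rpow_sub_add_two_pos hα hα2 hl0.le hl1.ne
  refine ⟨hA, ?_⟩
  have hD : 0 < 2 * lam ^ α - α * lam ^ (2:ℝ) := by
    have hsq_lt : lam ^ (2:ℝ) < lam ^ α := rpow_lt_rpow_of_exponent_gt hl0 hl1 hα2
    nlinarith [mul_pos (sub_pos.2 hα2) (rpow_pos_of_pos hl0 (2:ℝ))]
  rw [g1_lhs_eq_div hα.ne' hl0, div_le_div_iff₀ (mul_pos hα hD) hA]
  have hG := mul_nonneg (rpow_pos_of_pos hl0 α).le (g1Gap_nonneg hα.le hα2.le hβ.le hl0 hl1.le)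
  linarith [cross_sub_eq_rpow_mul_g1Gap (α := α) (β := β) hl0]
end

section
/- Let 0 < α < 2 < β and let A, C, D > 0 and B ∈ ℝ. Define s(λ) = Aλ² + B − Cλ^α − Dλ^β. If s'(1) = 0 and s''(1) ≤ 0, then s'''(λ) < 0 for all λ > 1, s''(λ) < 0 for all λ > 1, s'(λ) < 0 for all λ > 1, and s(λ) < s(1) for all λ > 1. -/
/-!
On `(0, ∞)` the derivatives of `s` are again combinations of real powers, and `s'''` carries
the monomials `λ^(α-3)` and `λ^(β-3)` with coefficients of opposite sign. The two conditions
at `1` combine to `α(2-α)C ≤ β(β-2)D`; as `α - 3 < β - 3`, this makes the `β`-term dominate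
for `λ > 1`, so `s''' < 0` there. Strict monotonicity on `[1, ∞)`, applied three times
together with `s''(1) ≤ 0` and `s'(1) = 0`, gives the remaining three inequalities.
-/

open Set Filter

noncomputable def powComb (a p c q d r b : ℝ) (x : ℝ) : ℝ :=
  a * x ^ p + b - c * x ^ q - d * x ^ r

theorem hasDerivAt_powComb (a p c q d r b : ℝ) {x : ℝ} (hx : 0 < x) :
    HasDerivAt (powComb a p c q d r b)
      (powComb (a * p) (p - 1) (c * q) (q - 1) (d * r) (r - 1) 0 x) x := by
  have hpow (e : ℝ) : HasDerivAt (fun y : ℝ => y ^ e) (e * x ^ (e - 1)) x :=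
    Real.hasDerivAt_rpow_const (Or.inl hx.ne')
  refine (((((hpow p).const_mul a).add_const b).sub ((hpow q).const_mul c)).sub
    ((hpow r).const_mul d)).congr_deriv ?_
  simp only [powComb]
  ring

theorem hasDerivAt_deriv_of_forall_hasDerivAt {f g g' : ℝ → ℝ} {U : Set ℝ} (hU : IsOpen U)
    (hf : ∀ y ∈ U, HasDerivAt f (g y) y) (hg : ∀ y ∈ U, HasDerivAt g (g' y) y) :
    ∀ x ∈ U, HasDerivAt (deriv f) (g' x) x := fun x hx =>
  (hg x hx).congr_of_eventuallyEq <|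
    eventually_of_mem (hU.mem_nhds hx) fun y hy => (hf y hy).deriv

theorem strictAntiOn_Ici_of_deriv_neg {f : ℝ → ℝ} {a : ℝ} (hfa : ContinuousAt f a)
    (hf' : ∀ x, a < x → deriv f x < 0) : StrictAntiOn f (Ici a) := by
  refine strictAntiOn_of_deriv_neg (convex_Ici a) (fun x hx => ?_) (by simpa using hf')
  rcases (mem_Ici.1 hx).eq_or_lt' with rfl | hax
  · exact hfa.continuousWithinAt
  · exact (differentiableAt_of_deriv_ne_zero (hf' x hax).ne).continuousAt.continuousWithinAt

theorem mul_rpow_sub_three_lt_mul_rpow_sub_three {α β C D x : ℝ}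
    (hα : 0 ≤ α) (hα2 : α ≤ 2) (hβ : 2 < β) (hC : 0 ≤ C) (hD : 0 < D)
    (h : α * (2 - α) * C ≤ β * (β - 2) * D) (hx : 1 < x) :
    α * (α - 1) * (2 - α) * C * x ^ (α - 3) < β * (β - 1) * (β - 2) * D * x ^ (β - 3) := by
  have hpα : 0 < x ^ (α - 3) := Real.rpow_pos_of_pos (by linarith) _
  have hmono : x ^ (α - 3) < x ^ (β - 3) := (Real.rpow_lt_rpow_left_iff hx).mpr (by linarith)
  have hA : 0 ≤ α * (2 - α) * C := by have := sub_nonneg.2 hα2; positivity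
  have hB : 0 < β * (β - 2) * D := by have := sub_pos.2 hβ; positivity
  calc α * (α - 1) * (2 - α) * C * x ^ (α - 3) ≤ α * (2 - α) * C * x ^ (α - 3) := by
        gcongr ?_ * _; nlinarith
    _ ≤ β * (β - 2) * D * x ^ (α - 3) := by gcongr
    _ < β * (β - 2) * D * x ^ (β - 3) := by gcongr
    _ ≤ β * (β - 1) * (β - 2) * D * x ^ (β - 3) := by gcongr ?_ * _; nlinarith

theorem scaling_action_derivatives_general (α β A B C D : ℝ)
    (hα : 0 < α) (hα2 : α < 2) (hβ : 2 < β)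
    (hC : 0 < C) (hD : 0 < D)
    (s : ℝ → ℝ)
    (hs : s = fun lam : ℝ => A * lam ^ (2:ℝ) + B - C * lam ^ α - D * lam ^ β)
    (hs1 : deriv s 1 = 0) (hs2 : deriv (deriv s) 1 ≤ 0) :
    (∀ lam : ℝ, 1 < lam → deriv (deriv (deriv s)) lam < 0) ∧
    (∀ lam : ℝ, 1 < lam → deriv (deriv s) lam < 0) ∧
    (∀ lam : ℝ, 1 < lam → deriv s lam < 0) ∧
    (∀ lam : ℝ, 1 < lam → s lam < s 1) := by
  replace hs : s = powComb A 2 C α D β B := hs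
  have one_mem : (1 : ℝ) ∈ Ioi 0 := mem_Ioi.2 one_pos
  have d1 (x : ℝ) (hx : x ∈ Ioi 0) := hs ▸ hasDerivAt_powComb A 2 C α D β B hx
  have d2 := hasDerivAt_deriv_of_forall_hasDerivAt isOpen_Ioi d1
    fun x hx => hasDerivAt_powComb _ _ _ _ _ _ _ hx
  have d3 := hasDerivAt_deriv_of_forall_hasDerivAt isOpen_Ioi d2
    fun x hx => hasDerivAt_powComb _ _ _ _ _ _ _ hx
  have hcoeff : α * (2 - α) * C ≤ β * (β - 2) * D := by
    rw [(d1 1 one_mem).deriv] at hs1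
    rw [(d2 1 one_mem).deriv] at hs2
    simp only [powComb, Real.one_rpow] at hs1 hs2
    linear_combination hs2 - hs1
  have h3 (x : ℝ) (hx : 1 < x) : deriv (deriv (deriv s)) x < 0 := by
    have := mul_rpow_sub_three_lt_mul_rpow_sub_three hα.le hα2.le hβ hC.le hD hcoeff hx
    rw [(d3 x (one_pos.trans hx)).deriv]
    simp only [powComb]
    ring_nf at this ⊢
    linarith
  have h2 (x : ℝ) (hx : 1 < x) : deriv (deriv s) x < 0 :=
    ((strictAntiOn_Ici_of_deriv_neg (d3 1 one_mem).continuousAt h3)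
      self_mem_Ici hx.le hx).trans_le hs2
  have h1 (x : ℝ) (hx : 1 < x) : deriv s x < 0 :=
    ((strictAntiOn_Ici_of_deriv_neg (d2 1 one_mem).continuousAt h2)
      self_mem_Ici hx.le hx).trans_eq hs1
  exact ⟨h3, h2, h1, fun x hx =>
    (strictAntiOn_Ici_of_deriv_neg (d1 1 one_mem).continuousAt h1) self_mem_Ici hx.le hx⟩

theorem scaling_action_derivatives (α β A B C D : ℝ)
    (hα : 0 < α) (hα2 : α < 2) (hβ : 2 < β)
    (hA : 0 < A) (hC : 0 < C) (hD : 0 < D)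
    (s : ℝ → ℝ)
    (hs : s = fun lam : ℝ => A * lam ^ (2:ℝ) + B - C * lam ^ α - D * lam ^ β)
    (hs1 : deriv s 1 = 0) (hs2 : deriv (deriv s) 1 ≤ 0) :
    (∀ lam : ℝ, 1 < lam → deriv (deriv (deriv s)) lam < 0) ∧
    (∀ lam : ℝ, 1 < lam → deriv (deriv s) lam < 0) ∧
    (∀ lam : ℝ, 1 < lam → deriv s lam < 0) ∧
    (∀ lam : ℝ, 1 < lam → s lam < s 1) :=
  scaling_action_derivatives_general α β A B C D hα hα2 hβ hC hD s hs hs1 hs2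
end

section
/- Let 0 < α < 2 < β, A, C, D > 0, B ∈ ℝ, s(λ) = Aλ² + B − Cλ^α − Dλ^β, and q(λ) = λ·s'(λ) = 2Aλ² − αCλ^α − βDλ^β. If s'(1) = 0 and s''(1) ≤ 0, then q(λ) < 0 for all λ > 1. -/
open Real

theorem scaling_virial_negative (α β A B C D : ℝ)
    (hα : 0 < α) (hα2 : α < 2) (hβ : 2 < β)
    (hA : 0 < A) (hC : 0 < C) (hD : 0 < D)
    (s q : ℝ → ℝ)
    (hs : s = fun lam : ℝ => A * lam ^ (2:ℝ) + B - C * lam ^ α - D * lam ^ β)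
    (hq : q = fun lam : ℝ => 2 * A * lam ^ (2:ℝ) - α * C * lam ^ α - β * D * lam ^ β)
    (hs1 : deriv s 1 = 0) (hs2 : deriv (deriv s) 1 ≤ 0) :
    ∀ lam : ℝ, 1 < lam → q lam < 0 := by
  -- first derivative of s
  set f' : ℝ → ℝ := fun x =>
    A * (2 * x ^ ((2:ℝ) - 1)) - C * (α * x ^ (α - 1)) - D * (β * x ^ (β - 1)) with hf'
  have hds : ∀ x : ℝ, x ≠ 0 → HasDerivAt s (f' x) x := by
    intro x hx
    subst hs
    exact (((Real.hasDerivAt_rpow_const (p := 2) (Or.inl hx)).const_mul A).add_const B).sub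
        ((Real.hasDerivAt_rpow_const (p := α) (Or.inl hx)).const_mul C) |>.sub
        ((Real.hasDerivAt_rpow_const (p := β) (Or.inl hx)).const_mul D)
  -- s'(1) = 0 gives 2A = αC + βD
  have h1 : 2 * A = α * C + β * D := by
    have := (hds 1 one_ne_zero).deriv
    rw [hs1] at this
    simp only [hf', Real.one_rpow] at this
    linarith
  -- deriv s agrees with f' near 1
  have heq : deriv s =ᶠ[nhds 1] f' := by
    filter_upwards [eventually_ne_nhds one_ne_zero] with x hx using (hds x hx).deriv
  have hd2 : deriv (deriv s) 1 =
      A * (2 * (1 * 1 ^ ((2:ℝ) - 1 - 1))) - C * (α * ((α - 1) * 1 ^ (α - 1 - 1)))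
        - D * (β * ((β - 1) * 1 ^ (β - 1 - 1))) := by
    rw [heq.deriv_eq]
    have : HasDerivAt f'
        (A * (2 * (1 * (1:ℝ) ^ ((2:ℝ) - 1 - 1))) - C * (α * ((α - 1) * (1:ℝ) ^ (α - 1 - 1)))
          - D * (β * ((β - 1) * (1:ℝ) ^ (β - 1 - 1)))) 1 := by
      exact ((((Real.hasDerivAt_rpow_const (p := (2:ℝ) - 1)
            (Or.inl one_ne_zero)).const_mul 2).const_mul A).sub
          (((Real.hasDerivAt_rpow_const (p := α - 1)
            (Or.inl one_ne_zero)).const_mul α).const_mul C)).sub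
          (((Real.hasDerivAt_rpow_const (p := β - 1)
            (Or.inl one_ne_zero)).const_mul β).const_mul D) |>.congr_deriv (by ring)
    exact this.deriv
  have h2 : α * (2 - α) * C ≤ β * (β - 2) * D := by
    rw [hd2] at hs2
    simp only [Real.one_rpow, mul_one, one_mul] at hs2
    nlinarith
  intro lam hlam
  have hlam0 : (0:ℝ) < lam := by linarith
  have ht : 0 < Real.log lam := Real.log_pos hlam
  -- strict convexity of exp gives the slope inequality
  have key : (β - 2) * (lam ^ (2:ℝ) - lam ^ α) < (2 - α) * (lam ^ β - lam ^ (2:ℝ)) := by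
    have hslope := strictConvexOn_exp.slope_strict_mono_adjacent
      (x := α * Real.log lam) (y := 2 * Real.log lam) (z := β * Real.log lam)
      (Set.mem_univ _) (Set.mem_univ _)
      (by nlinarith) (by nlinarith)
    have e1 : Real.exp (α * Real.log lam) = lam ^ α := by
      rw [Real.rpow_def_of_pos hlam0, mul_comm]
    have e2 : Real.exp (2 * Real.log lam) = lam ^ (2:ℝ) := by
      rw [Real.rpow_def_of_pos hlam0, mul_comm]
    have e3 : Real.exp (β * Real.log lam) = lam ^ β := by
      rw [Real.rpow_def_of_pos hlam0, mul_comm]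
    rw [e1, e2, e3] at hslope
    have d1 : 2 * Real.log lam - α * Real.log lam = (2 - α) * Real.log lam := by ring
    have d2 : β * Real.log lam - 2 * Real.log lam = (β - 2) * Real.log lam := by ring
    rw [d1, d2, div_lt_div_iff₀ (by nlinarith) (by nlinarith)] at hslope
    nlinarith
  have hq' : q lam = α * C * (lam ^ (2:ℝ) - lam ^ α) + β * D * (lam ^ (2:ℝ) - lam ^ β) := by
    rw [hq]; linear_combination (lam ^ (2:ℝ)) * h1
  have hαpos : 0 < α * C := by positivity
  have hβpos : 0 < β * D := by positivity
  have hx : lam ^ (2:ℝ) < lam ^ β := (Real.rpow_lt_rpow_left_iff hlam).mpr hβ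
  have t1 : α * C * ((β - 2) * (lam ^ (2:ℝ) - lam ^ α)) <
      α * C * ((2 - α) * (lam ^ β - lam ^ (2:ℝ))) := by
    exact mul_lt_mul_of_pos_left key hαpos
  have t2 : α * (2 - α) * C * (lam ^ β - lam ^ (2:ℝ)) ≤
      β * (β - 2) * D * (lam ^ β - lam ^ (2:ℝ)) :=
    mul_le_mul_of_nonneg_right h2 (by linarith)
  rw [hq']
  nlinarith [t1, t2, hβ]
end

section
/- Under the assumptions of the key lemma (abstract real-number version): let 0 < α < 2 < β, p > 1, and let a, m, g, n ≥ 0 (representing ‖∇v‖², ω‖v‖_{L²}², G(v), ‖v‖_{L^{p+1}}^{p+1}) and λ₀ ∈ (0,1] with m ≤ (1 + β(β−α−2)/((p+1)α))·λ₀^β·n, and suppose the Nehari inequality at the rescaled function holds: λ₀^{2−α} a + λ₀^{−α} m − λ₀^{β−α} n ≥ g, and Q := a − (α/2)g − (β/(p+1))n ≤ 0. Then g ≤ (2β/((p+1)(2−αλ₀^{2−α})))·(λ₀^{2−α} + ((β−α−2)/α)λ₀^{β−α})·n. -/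
theorem key_lemma_potential_bound (α β p a m g n lam₀ : ℝ)
    (hα : 0 < α) (hα2 : α < 2) (hβ : 2 < β) (hp : 1 < p)
    (ha : 0 ≤ a) (hm : 0 ≤ m) (hg : 0 ≤ g) (hn : 0 ≤ n)
    (hlam₀ : 0 < lam₀) (hlam₀1 : lam₀ ≤ 1)
    (hmass : m ≤ (1 + β * (β - α - 2) / ((p + 1) * α)) * lam₀ ^ β * n)
    (hNehari : g ≤ lam₀ ^ (2 - α) * a + lam₀ ^ (-α) * m - lam₀ ^ (β - α) * n)
    (hQ : a - (α / 2) * g - (β / (p + 1)) * n ≤ 0) :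
    g ≤ (2 * β / ((p + 1) * (2 - α * lam₀ ^ (2 - α)))) *
      (lam₀ ^ (2 - α) + ((β - α - 2) / α) * lam₀ ^ (β - α)) * n := by
  set L2 := lam₀ ^ (2 - α) with hL2
  set Lb := lam₀ ^ (β - α) with hLb
  have hL2pos : 0 < L2 := Real.rpow_pos_of_pos hlam₀ _
  have hLbpos : 0 < Lb := Real.rpow_pos_of_pos hlam₀ _
  have hLa : (0:ℝ) < lam₀ ^ (-α) := Real.rpow_pos_of_pos hlam₀ _
  have hL2le : L2 ≤ 1 := Real.rpow_le_one hlam₀.le hlam₀1 (by linarith)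
  have hpow : lam₀ ^ (-α) * lam₀ ^ β = Lb := by
    rw [hLb, ← Real.rpow_add hlam₀]; ring_nf
  have hD : 0 < 2 - α * L2 := by nlinarith
  have hp1 : (0:ℝ) < p + 1 := by linarith
  -- m bound after multiplying by lam₀^(-α)
  have h1 : lam₀ ^ (-α) * m ≤ (1 + β * (β - α - 2) / ((p + 1) * α)) * Lb * n := by
    have := mul_le_mul_of_nonneg_left hmass hLa.le
    calc lam₀ ^ (-α) * m ≤ lam₀ ^ (-α) * ((1 + β * (β - α - 2) / ((p + 1) * α)) * lam₀ ^ β * n) := this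
      _ = (1 + β * (β - α - 2) / ((p + 1) * α)) * (lam₀ ^ (-α) * lam₀ ^ β) * n := by ring
      _ = (1 + β * (β - α - 2) / ((p + 1) * α)) * Lb * n := by rw [hpow]
  have h2 : g ≤ L2 * a + (β * (β - α - 2) / ((p + 1) * α)) * Lb * n := by nlinarith
  have hQ' : a ≤ (α / 2) * g + (β / (p + 1)) * n := by linarith
  have h3 : (2 - α * L2) * g ≤ 2 * (β / (p + 1)) * L2 * n
      + 2 * (β * (β - α - 2) / ((p + 1) * α)) * Lb * n := by
    nlinarith [mul_le_mul_of_nonneg_left hQ' hL2pos.le]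
  rw [div_mul_eq_mul_div, div_mul_eq_mul_div, le_div_iff₀ (by positivity)]
  have hαne : α ≠ 0 := ne_of_gt hα
  have hp1ne : (p + 1) ≠ 0 := ne_of_gt hp1
  have h3' : (2 - α * L2) * g * ((p + 1) * α)
      ≤ 2 * β * α * L2 * n + 2 * β * (β - α - 2) * Lb * n := by
    have := mul_le_mul_of_nonneg_right h3 (by positivity : (0:ℝ) ≤ (p + 1) * α)
    calc (2 - α * L2) * g * ((p + 1) * α) ≤ (2 * (β / (p + 1)) * L2 * n
        + 2 * (β * (β - α - 2) / ((p + 1) * α)) * Lb * n) * ((p + 1) * α) := this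
      _ = 2 * β * α * L2 * n + 2 * β * (β - α - 2) * Lb * n := by
          field_simp
  have goalα : g * ((p + 1) * (2 - α * L2)) * α
      ≤ (2 * β * (L2 + (β - α - 2) / α * Lb) * n) * α := by
    have hr : (2 * β * (L2 + (β - α - 2) / α * Lb) * n) * α
        = 2 * β * α * L2 * n + 2 * β * (β - α - 2) * Lb * n := by
      field_simp
    have hl : g * ((p + 1) * (2 - α * L2)) * α = (2 - α * L2) * g * ((p + 1) * α) := by ring
    rw [hr, hl]; exact h3'
  exact le_of_mul_le_mul_right goalα hα
end
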